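/- arXiv:2506.05269 — 5 statements merged into one kernel-verified Lean document; each statement's English description precedes it below -/
import Mathlib

section
/- There exists an invariant state ρ whose support equals the recurrent subspace R, i.e., supp(ρ) = sup{supp(σ) : σ an invariant state}. Consequently, R is an enclosure: every state with support in R has Φ_t-image with support in R for all t ≥ 0. -/
/-!
Supports of positive semidefinite matrices add: `supp (σ + ρ) = supp σ ⊔ supp ρ`. Averaging two
invariant states therefore shows that the supports of invariant states form a sup-closed family
of subspaces, and in the Noetherian lattice of subspaces such a family contains its supremum:
some invariant state `ρ` has support `R`.

For the enclosure property, a state `σ` with `supp σ ⊆ supp ρ` is dominated, `σ ≤ c • ρ`: it is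
squeezed by the support projection `P` of `ρ`, and `P ≤ c • ρ` because the spectrum of `ρ` is
finite. Positivity and invariance of `ρ` give `Φ t σ ≤ c • ρ`, and Loewner domination of positive
semidefinite matrices implies inclusion of supports.
-/

open Matrix
open scoped ComplexOrder MatrixOrder

theorem LinearMap.IsSymmetric.range_le_range_of_ker_le {𝕜 E : Type*} [RCLike 𝕜]
    [NormedAddCommGroup E] [InnerProductSpace 𝕜 E] [FiniteDimensional 𝕜 E]
    {S T : E →ₗ[𝕜] E} (hS : S.IsSymmetric) (hT : T.IsSymmetric)
    (h : LinearMap.ker T ≤ LinearMap.ker S) : LinearMap.range S ≤ LinearMap.range T := by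
  rw [← (LinearMap.range S).orthogonal_orthogonal, ← (LinearMap.range T).orthogonal_orthogonal,
    hS.orthogonal_range, hT.orthogonal_range]
  exact Submodule.orthogonal_le h

namespace Matrix
variable {𝕜 : Type*} [RCLike 𝕜] {ι : Type*} [Fintype ι] [DecidableEq ι]

theorem IsHermitian.range_toLin'_le_of_ker_le {A B : Matrix ι ι 𝕜} (hA : A.IsHermitian)
    (hB : B.IsHermitian) (h : LinearMap.ker (toLin' B) ≤ LinearMap.ker (toLin' A)) :
    LinearMap.range (toLin' A) ≤ LinearMap.range (toLin' B) := by
  have hE := (isSymmetric_toEuclideanLin_iff.mpr hA).range_le_range_of_ker_le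
    (isSymmetric_toEuclideanLin_iff.mpr hB)
    fun v hv => congrArg (WithLp.toLp 2) (h (congrArg WithLp.ofLp hv))
  rintro _ ⟨x, rfl⟩
  obtain ⟨y, hy⟩ := hE ⟨WithLp.toLp 2 x, rfl⟩
  exact ⟨WithLp.ofLp y, congrArg WithLp.ofLp hy⟩

theorem PosSemidef.ker_toLin'_le_of_le {A B : Matrix ι ι 𝕜} (hA : A.PosSemidef) (hAB : A ≤ B) :
    LinearMap.ker (toLin' B) ≤ LinearMap.ker (toLin' A) := by
  intro x hx
  rw [LinearMap.mem_ker, toLin'_apply] at hx ⊢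
  refine (hA.dotProduct_mulVec_zero_iff x).mp (le_antisymm ?_ (hA.dotProduct_mulVec_nonneg x))
  have := (le_iff.mp hAB).dotProduct_mulVec_nonneg x
  rwa [sub_mulVec, dotProduct_sub, hx, dotProduct_zero, zero_sub, neg_nonneg] at this

theorem PosSemidef.range_toLin'_le_of_le {A B : Matrix ι ι 𝕜} (hA : A.PosSemidef) (hAB : A ≤ B) :
    LinearMap.range (toLin' A) ≤ LinearMap.range (toLin' B) :=
  hA.1.range_toLin'_le_of_ker_le (nonneg_iff_posSemidef.mp (hA.nonneg.trans hAB)).1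
    (hA.ker_toLin'_le_of_le hAB)

theorem PosSemidef.range_toLin'_add {A B : Matrix ι ι 𝕜} (hA : A.PosSemidef) (hB : B.PosSemidef) :
    LinearMap.range (toLin' (A + B)) = LinearMap.range (toLin' A) ⊔ LinearMap.range (toLin' B) :=
  le_antisymm (map_add toLin' A B ▸ LinearMap.range_add_le _ _)
    (sup_le (hA.range_toLin'_le_of_le (le_add_of_nonneg_right hB.nonneg))
      (hB.range_toLin'_le_of_le (le_add_of_nonneg_left hA.nonneg)))

theorem PosSemidef.exists_isStarProjection_le_smul {B : Matrix ι ι 𝕜} (hB : B.PosSemidef) :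
    ∃ P : Matrix ι ι 𝕜, IsStarProjection P ∧ P * B = B ∧ ∃ c : ℝ, P ≤ c • B := by
  set p : ℝ → ℝ := fun x => if x = 0 then 0 else 1
  have hp : ContinuousOn p (spectrum ℝ B) := B.finite_real_spectrum.continuousOn _
  have hpp : (fun x => p x * p x) = p := by ext x; by_cases hx : x = 0 <;> simp [p, hx]
  have hpid : (fun x => p x * id x) = id := by ext x; by_cases hx : x = 0 <;> simp [p, hx]
  obtain ⟨c, hc⟩ := (B.finite_real_spectrum.image (·⁻¹)).bddAbove
  refine ⟨cfc p B, ⟨?_, cfc_predicate p B⟩, ?_, c, ?_⟩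
  · rw [IsIdempotentElem, ← cfc_mul p p B, hpp]
  · nth_rewrite 2 [← cfc_id ℝ B]
    rw [← cfc_mul p id B, hpid, cfc_id ℝ B]
  · rw [← cfc_const_mul_id c B]
    refine cfc_mono fun x hx => ?_
    have hx0 : 0 ≤ x := spectrum_nonneg_of_nonneg hB.nonneg hx
    rcases hx0.eq_or_lt with rfl | hxpos
    · simp [p]
    · calc p x = x⁻¹ * x := by simp [p, hxpos.ne']
        _ ≤ c * x := mul_le_mul_of_nonneg_right (hc ⟨x, hx, rfl⟩) hx0

theorem PosSemidef.exists_le_smul_of_range_le {A B : Matrix ι ι 𝕜} (hA : A.PosSemidef)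
    (hB : B.PosSemidef) (h : LinearMap.range (toLin' A) ≤ LinearMap.range (toLin' B)) :
    ∃ c : ℝ, A ≤ c • B := by
  obtain ⟨P, hP, hPB, c, hPc⟩ := hB.exists_isStarProjection_le_smul
  have hPA : P * A = A := by
    refine toLin'.injective (LinearMap.ext fun x => ?_)
    obtain ⟨y, hy⟩ := h (LinearMap.mem_range_self (toLin' A) x)
    simp only [toLin'_apply] at hy ⊢
    rw [← mulVec_mulVec, ← hy, mulVec_mulVec, hPB]
  have hAP : A * P = A := by
    simpa [hA.1.star_eq, hP.isSelfAdjoint.star_eq] using congrArg star hPA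
  obtain ⟨t, ht⟩ := A.finite_real_spectrum.bddAbove
  have hAt : A ≤ algebraMap ℝ _ (max t 0) :=
    le_algebraMap_of_spectrum_le (fun x hx => le_max_of_le_left (ht hx)) hA.1
  refine ⟨max t 0 * c, ?_⟩
  calc A = star P * A * P := by rw [hP.isSelfAdjoint.star_eq, hPA, hAP]
    _ ≤ star P * algebraMap ℝ _ (max t 0) * P := star_left_conjugate_le_conjugate hAt P
    _ = max t 0 • P := by
      rw [hP.isSelfAdjoint.star_eq, Algebra.algebraMap_eq_smul_one, mul_smul_comm, mul_one,
        smul_mul_assoc, hP.isIdempotentElem.eq]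
    _ ≤ max t 0 • c • B := smul_le_smul_of_nonneg_left hPc (le_max_right _ _)
    _ = (max t 0 * c) • B := smul_smul _ _ _

theorem range_toLin'_map_le_of_range_le {f : Matrix ι ι 𝕜 →ₗ[𝕜] Matrix ι ι 𝕜}
    (hf : ∀ X, X.PosSemidef → (f X).PosSemidef) {ρ σ : Matrix ι ι 𝕜} (hρ : ρ.PosSemidef)
    (hfρ : f ρ = ρ) (hσ : σ.PosSemidef)
    (h : LinearMap.range (toLin' σ) ≤ LinearMap.range (toLin' ρ)) :
    LinearMap.range (toLin' (f σ)) ≤ LinearMap.range (toLin' ρ) := by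
  obtain ⟨c, hc⟩ := hσ.exists_le_smul_of_range_le hρ h
  have hfc : f σ ≤ c • ρ := by
    have := hf _ (le_iff.mp hc)
    rwa [map_sub, LinearMap.map_smul_of_tower, hfρ] at this
  calc LinearMap.range (toLin' (f σ)) ≤ LinearMap.range (toLin' (c • ρ)) :=
        (hf σ hσ).range_toLin'_le_of_le hfc
    _ ≤ LinearMap.range (toLin' ρ) := by
      rw [RCLike.real_smul_eq_coe_smul (K := 𝕜), map_smul]
      exact LinearMap.range_smul_le_range _ _

theorem supClosed_image_range_toLin' {S : Set (Matrix ι ι 𝕜)} (hS : Convex ℝ S)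
    (hpsd : ∀ σ ∈ S, σ.PosSemidef) :
    SupClosed ((fun σ => LinearMap.range (toLin' σ)) '' S) := by
  rintro _ ⟨σ, hσ, rfl⟩ _ ⟨ρ, hρ, rfl⟩
  have hhalf : (0 : ℝ) < 1 / 2 := by norm_num
  refine ⟨(1 / 2 : ℝ) • σ + (1 / 2 : ℝ) • ρ, hS hσ hρ hhalf.le hhalf.le (by norm_num), ?_⟩
  dsimp only
  rw [PosSemidef.range_toLin'_add ((hpsd σ hσ).smul hhalf.le) ((hpsd ρ hρ).smul hhalf.le)]
  simp only [RCLike.real_smul_eq_coe_smul (K := 𝕜), map_smul,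
    LinearMap.range_smul _ _ (by norm_num : ((1 / 2 : ℝ) : 𝕜) ≠ 0)]

theorem exists_mem_range_toLin'_eq_sSup {S : Set (Matrix ι ι 𝕜)} (hS : Convex ℝ S)
    (hpsd : ∀ σ ∈ S, σ.PosSemidef) (hne : S.Nonempty) :
    ∃ ρ ∈ S, LinearMap.range (toLin' ρ) = sSup ((fun σ => LinearMap.range (toLin' σ)) '' S) :=
  CompleteLattice.WellFoundedGT.isSupClosedCompact _ inferInstance _ (hne.image _)
    (supClosed_image_range_toLin' hS hpsd)

end Matrix

def invariantStates {𝕜 : Type*} [RCLike 𝕜] {ι : Type*} [Fintype ι]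
    (Φ : ℝ → Matrix ι ι 𝕜 →ₗ[𝕜] Matrix ι ι 𝕜) : Set (Matrix ι ι 𝕜) :=
  {σ | (σ.PosSemidef ∧ σ.trace = 1) ∧ ∀ t : ℝ, 0 ≤ t → Φ t σ = σ}

theorem convex_invariantStates {𝕜 : Type*} [RCLike 𝕜] {ι : Type*} [Fintype ι]
    (Φ : ℝ → Matrix ι ι 𝕜 →ₗ[𝕜] Matrix ι ι 𝕜) : Convex ℝ (invariantStates Φ) := by
  rintro σ ⟨⟨hσ, hσtr⟩, hσinv⟩ ρ ⟨⟨hρ, hρtr⟩, hρinv⟩ a b ha hb hab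
  refine ⟨⟨(hσ.smul ha).add (hρ.smul hb), ?_⟩, fun t ht => ?_⟩
  · rw [trace_add, trace_smul, trace_smul, hσtr, hρtr, ← add_smul, hab, one_smul]
  · rw [map_add, LinearMap.map_smul_of_tower, LinearMap.map_smul_of_tower, hσinv t ht, hρinv t ht]

theorem exists_invariant_state_support_eq_recurrent_general {n : ℕ}
    (Φ : ℝ → Matrix (Fin n) (Fin n) ℂ →ₗ[ℂ] Matrix (Fin n) (Fin n) ℂ)
    (hPos : ∀ t : ℝ, 0 ≤ t → ∀ X : Matrix (Fin n) (Fin n) ℂ,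
      X.PosSemidef → (Φ t X).PosSemidef)
    (hexists : ∃ σ : Matrix (Fin n) (Fin n) ℂ,
      (σ.PosSemidef ∧ σ.trace = 1) ∧ ∀ t : ℝ, 0 ≤ t → Φ t σ = σ)
    (R : Submodule ℂ (Fin n → ℂ))
    (hR : R = sSup {V : Submodule ℂ (Fin n → ℂ) |
      ∃ σ : Matrix (Fin n) (Fin n) ℂ, (σ.PosSemidef ∧ σ.trace = 1) ∧
        (∀ t : ℝ, 0 ≤ t → Φ t σ = σ) ∧ V = LinearMap.range (Matrix.toLin' σ)}) :
    (∃ ρ : Matrix (Fin n) (Fin n) ℂ, (ρ.PosSemidef ∧ ρ.trace = 1) ∧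
      (∀ t : ℝ, 0 ≤ t → Φ t ρ = ρ) ∧ LinearMap.range (Matrix.toLin' ρ) = R) ∧
    (∀ σ : Matrix (Fin n) (Fin n) ℂ, (σ.PosSemidef ∧ σ.trace = 1) →
      LinearMap.range (Matrix.toLin' σ) ≤ R →
      ∀ t : ℝ, 0 ≤ t → LinearMap.range (Matrix.toLin' (Φ t σ)) ≤ R) := by
  have hR' : R = sSup ((fun σ => LinearMap.range (toLin' σ)) '' invariantStates Φ) := by
    rw [hR]; congr 1; ext V; simp [invariantStates, eq_comm, and_assoc]
  obtain ⟨ρ, hρ, hρR⟩ := exists_mem_range_toLin'_eq_sSup (convex_invariantStates Φ)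
    (fun σ hσ => hσ.1.1) hexists
  rw [← hR'] at hρR
  refine ⟨⟨ρ, hρ.1, hρ.2, hρR⟩, fun σ hσ hσR t ht => ?_⟩
  rw [← hρR] at hσR ⊢
  exact range_toLin'_map_le_of_range_le (hPos t ht) hρ.1.1 (hρ.2 t ht) hσ.1 hσR

/-- There exists an invariant state whose support equals the recurrent
subspace `R` (the span/supremum of supports of all invariant states); consequently `R`
is an enclosure. -/
theorem exists_invariant_state_support_eq_recurrent {n : ℕ}
    (Φ : ℝ → Matrix (Fin n) (Fin n) ℂ →ₗ[ℂ] Matrix (Fin n) (Fin n) ℂ)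
    (hsemi : ∀ s t : ℝ, 0 ≤ s → 0 ≤ t → Φ (s + t) = (Φ s).comp (Φ t))
    (hTP : ∀ t : ℝ, 0 ≤ t → ∀ X : Matrix (Fin n) (Fin n) ℂ, (Φ t X).trace = X.trace)
    (hPos : ∀ t : ℝ, 0 ≤ t → ∀ X : Matrix (Fin n) (Fin n) ℂ,
      X.PosSemidef → (Φ t X).PosSemidef)
    (hexists : ∃ σ : Matrix (Fin n) (Fin n) ℂ,
      (σ.PosSemidef ∧ σ.trace = 1) ∧ ∀ t : ℝ, 0 ≤ t → Φ t σ = σ)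
    (R : Submodule ℂ (Fin n → ℂ))
    (hR : R = sSup {V : Submodule ℂ (Fin n → ℂ) |
      ∃ σ : Matrix (Fin n) (Fin n) ℂ, (σ.PosSemidef ∧ σ.trace = 1) ∧
        (∀ t : ℝ, 0 ≤ t → Φ t σ = σ) ∧ V = LinearMap.range (Matrix.toLin' σ)}) :
    (∃ ρ : Matrix (Fin n) (Fin n) ℂ, (ρ.PosSemidef ∧ ρ.trace = 1) ∧
      (∀ t : ℝ, 0 ≤ t → Φ t ρ = ρ) ∧ LinearMap.range (Matrix.toLin' ρ) = R) ∧
    (∀ σ : Matrix (Fin n) (Fin n) ℂ, (σ.PosSemidef ∧ σ.trace = 1) →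
      LinearMap.range (Matrix.toLin' σ) ≤ R →
      ∀ t : ℝ, 0 ≤ t → LinearMap.range (Matrix.toLin' (Φ t σ)) ≤ R) :=
  exists_invariant_state_support_eq_recurrent_general Φ hPos hexists R hR
end

section
/- Two distinct extremal invariant states of a quantum dynamical semigroup have different supports. Equivalently: if ρ₁ and ρ₂ are extremal points of the convex set of invariant states and supp(ρ₁) = supp(ρ₂), then ρ₁ = ρ₂. -/
/-!
Since `ρ₁` and `ρ₂` have the same range `V`, and `x ↦ x* ρ₁ x` is bounded below by a positive
constant on the (compact) unit sphere of `V`, there is `K > 0` with `ρ₂ ≤ K ρ₁`: vectors in the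
common kernel contribute nothing to either quadratic form. Hence `ρ₁ ± ε (ρ₁ - ρ₂)` is positive
semidefinite for small `ε > 0`; as an affine combination of invariant states it also has trace one
and is invariant. So `ρ₁` is the midpoint of two invariant states, and extremality forces
`ε (ρ₁ - ρ₂) = 0`.
-/

open Matrix
open scoped ComplexOrder

section Homogeneous

variable {𝕜 E : Type*} [RCLike 𝕜] [NormedAddCommGroup E] [NormedSpace 𝕜 E]
  [FiniteDimensional 𝕜 E]

theorem Submodule.exists_le_mul_of_homogeneous (V : Submodule 𝕜 E) {f g : E → ℝ}
    (hf : Continuous f) (hg : Continuous g)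
    (hf_smul : ∀ (c : 𝕜) x, f (c • x) = ‖c‖ ^ 2 * f x)
    (hg_smul : ∀ (c : 𝕜) x, g (c • x) = ‖c‖ ^ 2 * g x)
    (hpos : ∀ x ∈ V, x ≠ 0 → 0 < f x) :
    ∃ K : ℝ, 0 < K ∧ ∀ x ∈ V, g x ≤ K * f x := by
  have := FiniteDimensional.proper_rclike 𝕜 E
  set s := (V : Set E) ∩ Metric.sphere 0 1
  have hs : IsCompact s := (isCompact_sphere 0 1).inter_left V.closed_of_finiteDimensional
  have hfs : ∀ u ∈ s, 0 < f u := fun u hu ↦ hpos u hu.1 (ne_zero_of_mem_unit_sphere ⟨u, hu.2⟩)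
  obtain ⟨C, hC⟩ := hs.exists_bound_of_continuousOn (f := fun u ↦ g u / f u) <|
    hg.continuousOn.div hf.continuousOn fun u hu ↦ (hfs u hu).ne'
  refine ⟨|C| + 1, by positivity, fun x hx ↦ ?_⟩
  obtain rfl | hx0 := eq_or_ne x 0
  · have hf0 : f 0 = 0 := by simpa using hf_smul 0 0
    have hg0 : g 0 = 0 := by simpa using hg_smul 0 0
    simp [hf0, hg0]
  set u := (‖x‖⁻¹ : 𝕜) • x
  have hu : u ∈ s := ⟨V.smul_mem _ hx, by simp [u, norm_smul, hx0]⟩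
  have hxu : x = (‖x‖ : 𝕜) • u := by simp [u, smul_smul, hx0]
  have hgu : g u ≤ (|C| + 1) * f u := by
    have hratio := (Real.le_norm_self _).trans ((hC u hu).trans (le_abs_self C))
    rw [div_le_iff₀ (hfs u hu)] at hratio
    linarith [hfs u hu]
  rw [hxu, hf_smul, hg_smul, mul_left_comm]
  exact mul_le_mul_of_nonneg_left hgu (by positivity)

end Homogeneous

theorem eq_zero_of_add_mem_of_sub_mem_of_mem_extremePoints {𝕜 E : Type*} [Field 𝕜]
    [LinearOrder 𝕜] [IsStrictOrderedRing 𝕜] [AddCommGroup E] [Module 𝕜 E] {A : Set E} {x v : E}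
    (hx : x ∈ A.extremePoints 𝕜) (hadd : x + v ∈ A) (hsub : x - v ∈ A) : v = 0 := by
  have : x ∈ openSegment 𝕜 (x + v) (x - v) := ⟨1 / 2, 1 / 2, by norm_num, by norm_num,
    by norm_num, by module⟩
  exact add_eq_left.mp (hx.2 hadd hsub this)

namespace Matrix

variable {𝕜 n : Type*} [RCLike 𝕜] [Fintype n]

lemma re_dotProduct_mulVec_smul (M : Matrix n n 𝕜) (c : 𝕜) (x : n → 𝕜) :
    RCLike.re (star (c • x) ⬝ᵥ M *ᵥ (c • x)) = ‖c‖ ^ 2 * RCLike.re (star x ⬝ᵥ M *ᵥ x) := by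
  rw [star_smul, mulVec_smul, dotProduct_smul, smul_dotProduct, smul_smul, smul_eq_mul,
    RCLike.star_def, RCLike.mul_conj, ← RCLike.ofReal_pow, RCLike.re_ofReal_mul]

lemma IsHermitian.star_vecMul_eq_zero {M : Matrix n n 𝕜} (hM : M.IsHermitian) {w : n → 𝕜}
    (hw : M *ᵥ w = 0) : star w ᵥ* M = 0 := by
  rw [← hM.eq, ← star_mulVec, hw, star_zero]

lemma IsHermitian.dotProduct_mulVec_add_of_mulVec_eq_zero {M : Matrix n n 𝕜}
    (hM : M.IsHermitian) (v : n → 𝕜) {w : n → 𝕜} (hw : M *ᵥ w = 0) :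
    star (v + w) ⬝ᵥ M *ᵥ (v + w) = star v ⬝ᵥ M *ᵥ v := by
  rw [mulVec_add, hw, add_zero, star_add, add_dotProduct, dotProduct_mulVec (star w),
    hM.star_vecMul_eq_zero hw, zero_dotProduct, add_zero]

variable [DecidableEq n]

lemma IsHermitian.disjoint_range_ker {A : Matrix n n 𝕜} (hA : A.IsHermitian) :
    Disjoint (LinearMap.range (toLin' A)) (LinearMap.ker (toLin' A)) := by
  refine Submodule.disjoint_def.mpr fun x ⟨y, hy⟩ hx ↦ ?_
  rw [toLin'_apply] at hy
  rw [LinearMap.mem_ker, toLin'_apply] at hx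
  have : star x ⬝ᵥ A *ᵥ y = 0 := by
    rw [dotProduct_mulVec, hA.star_vecMul_eq_zero hx, zero_dotProduct]
  rwa [hy, dotProduct_star_self_eq_zero] at this

lemma IsHermitian.isCompl_range_ker {A : Matrix n n 𝕜} (hA : A.IsHermitian) :
    IsCompl (LinearMap.range (toLin' A)) (LinearMap.ker (toLin' A)) :=
  (Submodule.isCompl_iff_disjoint _ _
    (LinearMap.finrank_range_add_finrank_ker (toLin' A)).ge).mpr hA.disjoint_range_ker

lemma PosSemidef.ker_le_ker_of_range_le {A B : Matrix n n 𝕜} (hA : A.IsHermitian)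
    (hB : B.PosSemidef) (h : LinearMap.range (toLin' B) ≤ LinearMap.range (toLin' A)) :
    LinearMap.ker (toLin' A) ≤ LinearMap.ker (toLin' B) := by
  intro w hw
  rw [LinearMap.mem_ker, toLin'_apply] at hw ⊢
  obtain ⟨u, hu⟩ := h ⟨w, rfl⟩
  rw [toLin'_apply, toLin'_apply] at hu
  refine (hB.dotProduct_mulVec_zero_iff w).mp ?_
  rw [← hu, dotProduct_mulVec, hA.star_vecMul_eq_zero hw, zero_dotProduct]

lemma PosSemidef.re_dotProduct_mulVec_pos {A : Matrix n n 𝕜} (hA : A.PosSemidef) {x : n → 𝕜}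
    (hx : x ∈ LinearMap.range (toLin' A)) (hx0 : x ≠ 0) :
    0 < RCLike.re (star x ⬝ᵥ A *ᵥ x) := by
  obtain ⟨hre, him⟩ := RCLike.nonneg_iff.mp (hA.dotProduct_mulVec_nonneg x)
  refine hre.lt_of_ne fun h ↦ hx0 ?_
  have hAx : A *ᵥ x = 0 := (hA.dotProduct_mulVec_zero_iff x).mp <|
    RCLike.ext (by simpa using h.symm) (by simpa using him)
  exact Submodule.disjoint_def.mp hA.isHermitian.disjoint_range_ker x hx
    (by rwa [LinearMap.mem_ker, toLin'_apply])

theorem PosSemidef.exists_posSemidef_smul_sub_of_range_le {A B : Matrix n n 𝕜}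
    (hA : A.PosSemidef) (hB : B.PosSemidef)
    (h : LinearMap.range (toLin' B) ≤ LinearMap.range (toLin' A)) :
    ∃ K : ℝ, 0 < K ∧ (K • A - B).PosSemidef := by
  obtain ⟨K, hK, hBA⟩ := (LinearMap.range (toLin' A)).exists_le_mul_of_homogeneous
    (f := fun x ↦ RCLike.re (star x ⬝ᵥ A *ᵥ x)) (g := fun x ↦ RCLike.re (star x ⬝ᵥ B *ᵥ x))
    (by fun_prop) (by fun_prop) A.re_dotProduct_mulVec_smul B.re_dotProduct_mulVec_smul
    fun x hx hx0 ↦ hA.re_dotProduct_mulVec_pos hx hx0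
  refine ⟨K, hK, .of_dotProduct_mulVec_nonneg ((hA.smul hK.le).isHermitian.sub hB.isHermitian)
    fun x ↦ ?_⟩
  -- the kernel of `A` lies in that of `B`, so only the component of `x` in the range matters
  obtain ⟨v, hv, w, hw, rfl⟩ := Submodule.mem_sup.mp
    (hA.isHermitian.isCompl_range_ker.sup_eq_top ▸ Submodule.mem_top : x ∈ _)
  have hAw : A *ᵥ w = 0 := by rwa [LinearMap.mem_ker, toLin'_apply] at hw
  have hBw : B *ᵥ w = 0 := by
    simpa [toLin'_apply] using hB.ker_le_ker_of_range_le hA.isHermitian h hw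
  rw [sub_mulVec, dotProduct_sub, smul_mulVec, dotProduct_smul,
    hA.isHermitian.dotProduct_mulVec_add_of_mulVec_eq_zero v hAw,
    hB.isHermitian.dotProduct_mulVec_add_of_mulVec_eq_zero v hBw]
  have hAv := RCLike.nonneg_iff.mp (hA.dotProduct_mulVec_nonneg v)
  have hBv := RCLike.nonneg_iff.mp (hB.dotProduct_mulVec_nonneg v)
  refine RCLike.nonneg_iff.mpr ⟨?_, ?_⟩
  · simpa [RCLike.smul_re] using hBA v hv
  · simp [RCLike.smul_im, hAv.2, hBv.2]

theorem PosSemidef.exists_posSemidef_add_smul_sub_of_range_le {A B : Matrix n n 𝕜}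
    (hA : A.PosSemidef) (hB : B.PosSemidef)
    (h : LinearMap.range (toLin' B) ≤ LinearMap.range (toLin' A)) :
    ∃ ε : ℝ, 0 < ε ∧ (A + ε • (A - B)).PosSemidef ∧ (A - ε • (A - B)).PosSemidef := by
  obtain ⟨K, hK, hKAB⟩ := hA.exists_posSemidef_smul_sub_of_range_le hB h
  have hε : 0 < (1 + K)⁻¹ := by positivity
  refine ⟨(1 + K)⁻¹, hε, ?_, ?_⟩
  · have : A + (1 + K)⁻¹ • (A - B) = (1 + K)⁻¹ • (K • A - B) + (2 * (1 + K)⁻¹) • A := by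
      match_scalars <;> field_simp
      ring
    rw [this]
    exact (hKAB.smul hε.le).add (hA.smul (by positivity))
  · have : A - (1 + K)⁻¹ • (A - B) = ((1 + K)⁻¹ * K) • A + (1 + K)⁻¹ • B := by
      match_scalars <;> field_simp
      ring
    rw [this]
    exact (hA.smul (by positivity)).add (hB.smul hε.le)

end Matrix

theorem extremal_invariant_states_same_support_eq_general {n : ℕ}
    (Φ : ℝ → Matrix (Fin n) (Fin n) ℂ →ₗ[ℂ] Matrix (Fin n) (Fin n) ℂ)
    (S : Set (Matrix (Fin n) (Fin n) ℂ))
    (hS : S = {ρ | (ρ.PosSemidef ∧ ρ.trace = 1) ∧ ∀ t : ℝ, 0 ≤ t → Φ t ρ = ρ})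
    (ρ₁ ρ₂ : Matrix (Fin n) (Fin n) ℂ)
    (h₁ : ρ₁ ∈ Set.extremePoints ℝ S) (h₂ : ρ₂ ∈ Set.extremePoints ℝ S)
    (hsupp : LinearMap.range (Matrix.toLin' ρ₁) = LinearMap.range (Matrix.toLin' ρ₂)) :
    ρ₁ = ρ₂ := by
  obtain ⟨⟨hρ₁, htr₁⟩, hinv₁⟩ := hS ▸ h₁.1
  obtain ⟨⟨hρ₂, htr₂⟩, hinv₂⟩ := hS ▸ h₂.1
  have hline : ∀ r : ℝ, (ρ₁ + r • (ρ₁ - ρ₂)).PosSemidef → ρ₁ + r • (ρ₁ - ρ₂) ∈ S := by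
    intro r hr
    rw [hS]
    refine ⟨⟨hr, by simp [trace_add, trace_sub, htr₁, htr₂]⟩, fun t ht ↦ ?_⟩
    simp [LinearMap.map_smul_of_tower, hinv₁ t ht, hinv₂ t ht]
  obtain ⟨ε, hε, hplus, hminus⟩ :=
    hρ₁.exists_posSemidef_add_smul_sub_of_range_le hρ₂ hsupp.ge
  have hline_neg := hline (-ε)
  rw [neg_smul, ← sub_eq_add_neg] at hline_neg
  have hzero : ε • (ρ₁ - ρ₂) = 0 :=
    eq_zero_of_add_mem_of_sub_mem_of_mem_extremePoints h₁ (hline ε hplus) (hline_neg hminus)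
  exact sub_eq_zero.mp ((smul_eq_zero.mp hzero).resolve_left hε.ne')

/-- Two extremal invariant states of a quantum dynamical semigroup having
the same support must be equal. -/
theorem extremal_invariant_states_same_support_eq {n : ℕ}
    (Φ : ℝ → Matrix (Fin n) (Fin n) ℂ →ₗ[ℂ] Matrix (Fin n) (Fin n) ℂ)
    (hsemi : ∀ s t : ℝ, 0 ≤ s → 0 ≤ t → Φ (s + t) = (Φ s).comp (Φ t))
    (hTP : ∀ t : ℝ, 0 ≤ t → ∀ X : Matrix (Fin n) (Fin n) ℂ, (Φ t X).trace = X.trace)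
    (hPos : ∀ t : ℝ, 0 ≤ t → ∀ X : Matrix (Fin n) (Fin n) ℂ,
      X.PosSemidef → (Φ t X).PosSemidef)
    (S : Set (Matrix (Fin n) (Fin n) ℂ))
    (hS : S = {ρ | (ρ.PosSemidef ∧ ρ.trace = 1) ∧ ∀ t : ℝ, 0 ≤ t → Φ t ρ = ρ})
    (ρ₁ ρ₂ : Matrix (Fin n) (Fin n) ℂ)
    (h₁ : ρ₁ ∈ Set.extremePoints ℝ S) (h₂ : ρ₂ ∈ Set.extremePoints ℝ S)
    (hsupp : LinearMap.range (Matrix.toLin' ρ₁) = LinearMap.range (Matrix.toLin' ρ₂)) :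
    ρ₁ = ρ₂ :=
  extremal_invariant_states_same_support_eq_general Φ S hS ρ₁ ρ₂ h₁ h₂ hsupp
end

section
/- For the minimal open quantum random walk encoding a continuous-time Markov chain with rate matrix Q, a density matrix ρ on ℂⁿ is an invariant state of the Lindbladian if and only if (a) ρ is diagonal (assuming q_{jj} ≠ 0 for all j) and (b) its diagonal (π_i)_i satisfies Σ_i q_{ij} π_i = 0 for all j, i.e., the diagonal is an invariant measure of the Markov chain. -/
open Matrix
open scoped ComplexOrder

/-!
In the basis `|i⟩` the Lindbladian acts on diagonal entries by the transposed generator,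
`L(ρ)_jj = Σ_i q_ij ρ_ii`, and multiplies each off-diagonal entry by `(q_ii + q_jj)/2`.
The diagonal of a rate matrix with nonzero diagonal entries is negative, so these factors never
vanish: `L(ρ) = 0` forces the off-diagonal part to vanish and the diagonal to be invariant.
-/

open Finset

variable {ι : Type*} [Fintype ι] [DecidableEq ι]

namespace Matrix

section RateMatrix

variable {R : Type*} [AddCommGroup R]

theorem sum_filter_ne_eq_neg_diag (q : Matrix ι ι R) {i : ι} (hsum : ∑ j, q i j = 0) :
    ∑ j ∈ univ.filter (· ≠ i), q i j = -q i i := by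
  rw [filter_ne', sum_erase_eq_sub (mem_univ i), hsum, zero_sub]

theorem diag_neg_of_nonneg_of_sum_eq_zero [LinearOrder R] [IsOrderedAddMonoid R]
    (q : Matrix ι ι R) (hnonneg : ∀ i j, i ≠ j → 0 ≤ q i j) (hsum : ∀ i, ∑ j, q i j = 0)
    (hdiag : ∀ i, q i i ≠ 0) (i : ι) : q i i < 0 := by
  have hoff : 0 ≤ ∑ j ∈ univ.filter (· ≠ i), q i j :=
    sum_nonneg fun j hj => hnonneg i j (mem_filter.mp hj).2.symm
  rw [sum_filter_ne_eq_neg_diag q (hsum i), neg_nonneg] at hoff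
  exact hoff.lt_of_ne (hdiag i)

end RateMatrix

variable {α : Type*} [Semiring α]

theorem single_one_mul_add_mul_single_one_apply (ρ : Matrix ι ι α) (i a b : ι) :
    (single i i (1 : α) * ρ + ρ * single i i 1 : Matrix ι ι α) a b =
      (if i = a then ρ a b else 0) + (if i = b then ρ a b else 0) := by
  by_cases ha : i = a <;> by_cases hb : i = b <;> subst_vars <;> simp [*, Ne.symm]

theorem sum_smul_single_one_mul_add_mul_single_one_apply (c : ι → α) (ρ : Matrix ι ι α)
    (a b : ι) :
    (∑ i, c i • (single i i (1 : α) * ρ + ρ * single i i 1) : Matrix ι ι α) a b =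
      (c a + c b) * ρ a b := by
  simp only [Matrix.sum_apply, Matrix.smul_apply, smul_eq_mul,
    single_one_mul_add_mul_single_one_apply, mul_add, mul_ite, mul_zero, sum_add_distrib,
    sum_ite_eq', mem_univ, if_true, add_mul]

theorem sum_smul_single_mul_mul_single_apply (c : ι → ι → α) (ρ : Matrix ι ι α) (a b : ι) :
    (∑ i, ∑ j ∈ univ.filter (· ≠ i), c i j • (single j i (1 : α) * ρ * single i j 1) :
        Matrix ι ι α) a b =
      if a = b then ∑ i ∈ univ.filter (· ≠ a), c i a * ρ i i else 0 := by
  simp only [Matrix.sum_apply, Matrix.smul_apply, single_mul_mul_single, single_apply,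
    smul_eq_mul, one_mul, mul_one]
  split_ifs with hab
  · subst hab
    simp only [and_self, mul_ite, mul_zero, sum_ite_eq', mem_filter, mem_univ, true_and,
      sum_filter, ne_comm]
  · have hnot (j : ι) : ¬(j = a ∧ j = b) := fun h => hab (h.1.symm.trans h.2)
    simp only [hnot, if_false, mul_zero, sum_const_zero]

end Matrix

/-- The Lindbladian with jump operators `√q_ij |j⟩⟨i|` for `i ≠ j`. -/
noncomputable def minimalOQRWLindbladian (q : Matrix ι ι ℝ) (ρ : Matrix ι ι ℂ) :
    Matrix ι ι ℂ :=
  (∑ i, ∑ j ∈ univ.filter (· ≠ i), (q i j : ℂ) • (single j i (1 : ℂ) * ρ * single i j (1 : ℂ)))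
    - (1 / 2 : ℂ) • ∑ i, ((∑ j ∈ univ.filter (· ≠ i), q i j : ℝ) : ℂ) •
      (single i i (1 : ℂ) * ρ + ρ * single i i (1 : ℂ))

theorem minimalOQRWLindbladian_apply (q : Matrix ι ι ℝ) (hsum : ∀ i, ∑ j, q i j = 0)
    (ρ : Matrix ι ι ℂ) (a b : ι) :
    minimalOQRWLindbladian q ρ a b =
      if a = b then ∑ i, (q i a : ℂ) * ρ i i else (q a a + q b b : ℂ) / 2 * ρ a b := by
  simp only [minimalOQRWLindbladian, Matrix.sub_apply, Matrix.smul_apply, smul_eq_mul,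
    sum_smul_single_mul_mul_single_apply, sum_smul_single_one_mul_add_mul_single_one_apply,
    sum_filter_ne_eq_neg_diag q (hsum _)]
  split_ifs with hab
  · subst hab
    rw [filter_ne', ← add_sum_erase univ _ (mem_univ a)]
    push_cast
    ring
  · push_cast
    ring

theorem minimalOQRWLindbladian_eq_zero_iff (q : Matrix ι ι ℝ)
    (hnonneg : ∀ i j, i ≠ j → 0 ≤ q i j) (hsum : ∀ i, ∑ j, q i j = 0) (hdiag : ∀ i, q i i ≠ 0)
    (ρ : Matrix ι ι ℂ) :
    minimalOQRWLindbladian q ρ = 0 ↔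
      (∀ i j, i ≠ j → ρ i j = 0) ∧ (∀ j, ∑ i, (q i j : ℂ) * ρ i i = 0) := by
  have hcoef (i j : ι) : (q i i + q j j : ℂ) / 2 ≠ 0 := by
    have hneg : q i i + q j j < 0 := add_neg
      (diag_neg_of_nonneg_of_sum_eq_zero q hnonneg hsum hdiag i)
      (diag_neg_of_nonneg_of_sum_eq_zero q hnonneg hsum hdiag j)
    exact_mod_cast div_ne_zero hneg.ne two_ne_zero
  simp only [← Matrix.ext_iff, minimalOQRWLindbladian_apply q hsum, Matrix.zero_apply]
  constructor
  · intro h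
    refine ⟨fun i j hij => ?_, fun j => by simpa using h j j⟩
    have hij' := h i j
    rw [if_neg hij] at hij'
    exact (mul_eq_zero.mp hij').resolve_left (hcoef i j)
  · rintro ⟨hoff, hinv⟩ a b
    split_ifs with hab
    · exact hab ▸ hinv a
    · rw [hoff a b hab, mul_zero]

theorem minimal_OQRW_invariant_iff_general {n : ℕ}
    (q : Matrix (Fin n) (Fin n) ℝ)
    (hrate_nonneg : ∀ i j : Fin n, i ≠ j → 0 ≤ q i j)
    (hrate_sum : ∀ i : Fin n, ∑ j, q i j = 0)
    (hdiag_ne : ∀ j : Fin n, q j j ≠ 0)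
    (Lind : Matrix (Fin n) (Fin n) ℂ → Matrix (Fin n) (Fin n) ℂ)
    (hLind : ∀ ρ, Lind ρ =
      (∑ i, ∑ j ∈ Finset.univ.filter (· ≠ i), (q i j : ℂ) •
        (Matrix.single j i (1 : ℂ) * ρ * Matrix.single i j (1 : ℂ)))
      - (1 / 2 : ℂ) • ∑ i, ((∑ j ∈ Finset.univ.filter (· ≠ i), q i j : ℝ) : ℂ) •
        (Matrix.single i i (1 : ℂ) * ρ + ρ * Matrix.single i i (1 : ℂ)))
    (ρ : Matrix (Fin n) (Fin n) ℂ) :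
    Lind ρ = 0 ↔
      (∀ i j : Fin n, i ≠ j → ρ i j = 0) ∧
      (∀ j : Fin n, ∑ i, (q i j : ℂ) * ρ i i = 0) := by
  have hLind_eq : Lind = minimalOQRWLindbladian q := funext hLind
  rw [hLind_eq]
  exact minimalOQRWLindbladian_eq_zero_iff q hrate_nonneg hrate_sum hdiag_ne ρ

/-- For the minimal open quantum random walk encoding a continuous-time
Markov chain with rate matrix `Q`, a density matrix is invariant iff it is diagonal
and its diagonal is an invariant measure of the chain. -/
theorem minimal_OQRW_invariant_iff {n : ℕ}
    (q : Matrix (Fin n) (Fin n) ℝ)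
    (hrate_nonneg : ∀ i j : Fin n, i ≠ j → 0 ≤ q i j)
    (hrate_sum : ∀ i : Fin n, ∑ j, q i j = 0)
    (hdiag_ne : ∀ j : Fin n, q j j ≠ 0)
    (Lind : Matrix (Fin n) (Fin n) ℂ → Matrix (Fin n) (Fin n) ℂ)
    (hLind : ∀ ρ, Lind ρ =
      (∑ i, ∑ j ∈ Finset.univ.filter (· ≠ i), (q i j : ℂ) •
        (Matrix.single j i (1 : ℂ) * ρ * Matrix.single i j (1 : ℂ)))
      - (1 / 2 : ℂ) • ∑ i, ((∑ j ∈ Finset.univ.filter (· ≠ i), q i j : ℝ) : ℂ) •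
        (Matrix.single i i (1 : ℂ) * ρ + ρ * Matrix.single i i (1 : ℂ)))
    (ρ : Matrix (Fin n) (Fin n) ℂ) (hρ : ρ.PosSemidef ∧ ρ.trace = 1) :
    Lind ρ = 0 ↔
      (∀ i j : Fin n, i ≠ j → ρ i j = 0) ∧
      (∀ j : Fin n, ∑ i, (q i j : ℂ) * ρ i i = 0) :=
  minimal_OQRW_invariant_iff_general q hrate_nonneg hrate_sum hdiag_ne Lind hLind ρ
end

section
/- Under the non-degeneracy assumption (for every α ≠ β there exists j with either c(j|α)+conj(c(j|α)) ≠ c(j|β)+conj(c(j|β)) or |c(j|α)|² ≠ |c(j|β)|²), every density matrix ρ satisfying L(ρ) = 0 for the nondemolition Lindbladian is diagonal in the pointer basis (|α⟩)_α. -/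
open Matrix
open scoped ComplexOrder

/-- Under the non-degeneracy assumption, every density matrix
annihilated by the nondemolition Lindbladian is diagonal in the pointer basis. -/
theorem nondemolition_invariant_states_diagonal {n m : ℕ}
    (ε : Fin n → ℝ) (c : Fin m → Fin n → ℂ)
    (H : Matrix (Fin n) (Fin n) ℂ) (hH : H = Matrix.diagonal fun α => (ε α : ℂ))
    (L : Fin m → Matrix (Fin n) (Fin n) ℂ)
    (hL : ∀ j, L j = Matrix.diagonal (c j))
    (Lind : Matrix (Fin n) (Fin n) ℂ → Matrix (Fin n) (Fin n) ℂ)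
    (hLind : ∀ X, Lind X = -(Complex.I) • (H * X - X * H)
      + ∑ j, (L j * X * (L j)ᴴ
        - (1 / 2 : ℂ) • ((L j)ᴴ * (L j) * X + X * ((L j)ᴴ * (L j)))))
    (hnondeg : ∀ α β : Fin n, α ≠ β → ∃ j : Fin m,
      c j α + starRingEnd ℂ (c j α) ≠ c j β + starRingEnd ℂ (c j β) ∨
      Complex.normSq (c j α) ≠ Complex.normSq (c j β))
    (ρ : Matrix (Fin n) (Fin n) ℂ) (hρ : ρ.PosSemidef ∧ ρ.trace = 1)
    (hinv : Lind ρ = 0) :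
    ∀ α β : Fin n, α ≠ β → ρ α β = 0 := by
  intro α β hne
  set ω : ℂ := -Complex.I * ((ε α : ℂ) - ε β)
    + ∑ j, (c j α * star (c j β) - (1/2 : ℂ) * (star (c j α) * c j α)
        - (1/2 : ℂ) * (star (c j β) * c j β)) with hω
  have key : (Lind ρ) α β = ω * ρ α β := by
    rw [hLind, hH]
    simp only [hL, Matrix.diagonal_conjTranspose, Matrix.diagonal_mul_diagonal,
      Matrix.add_apply, Matrix.smul_apply, Matrix.sub_apply, Matrix.sum_apply,
      Matrix.mul_diagonal, Matrix.diagonal_mul, Pi.star_apply, Pi.mul_apply, smul_eq_mul]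
    rw [hω, add_mul, Finset.sum_mul]
    congr 1
    · ring
    · exact Finset.sum_congr rfl fun j _ => by ring
  have hzero : ω * ρ α β = 0 := by
    rw [← key, hinv]; rfl
  have hre : ω.re = ∑ j, (-(1/2 : ℝ)) * Complex.normSq (c j α - c j β) := by
    rw [hω, Complex.add_re, Complex.re_sum]
    have h1 : (-Complex.I * ((ε α : ℂ) - ε β)).re = 0 := by
      simp [Complex.mul_re]
    rw [h1, zero_add]
    refine Finset.sum_congr rfl fun j _ => ?_
    simp [Complex.sub_re, Complex.mul_re, Complex.sub_im, Complex.mul_im,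
      Complex.star_def, Complex.conj_re, Complex.conj_im, Complex.normSq_apply,
      Complex.div_re, Complex.div_im, Complex.normSq]
    ring
  have hωne : ω ≠ 0 := by
    intro h0
    have h0re : ω.re = 0 := by rw [h0]; rfl
    have hsum : ∑ j, Complex.normSq (c j α - c j β) = 0 := by
      have h2 : ∑ j, (-(1/2 : ℝ)) * Complex.normSq (c j α - c j β)
          = (-(1/2 : ℝ)) * ∑ j, Complex.normSq (c j α - c j β) := by
        rw [Finset.mul_sum]
      have h3 := hre; rw [h0re, h2] at h3
      linarith
    have hall : ∀ j, c j α = c j β := by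
      intro j
      have hnn : ∀ j ∈ Finset.univ, (0:ℝ) ≤ Complex.normSq (c j α - c j β) :=
        fun j _ => Complex.normSq_nonneg _
      have hterm := (Finset.sum_eq_zero_iff_of_nonneg hnn).mp hsum j (Finset.mem_univ j)
      exact sub_eq_zero.mp (Complex.normSq_eq_zero.mp hterm)
    obtain ⟨j, hj⟩ := hnondeg α β hne
    rcases hj with hj | hj
    · exact hj (by rw [hall j])
    · exact hj (by rw [hall j])
  rcases mul_eq_zero.mp hzero with h | h
  · exact absurd h hωne
  · exact h
end

section
/- Let Φ be a CPTP map on M_n(ℂ) and V₁, V₂ orthogonal enclosures with projections P₁, P₂, P₁P₂ = 0. If ρ is a density matrix with support in V₁ ⊕ V₂, then P₁Φ(ρ)P₁ = Φ(P₁ρP₁) and P₂Φ(ρ)P₂ = Φ(P₂ρP₂). (The semigroup maps block by block on the diagonal blocks.) -/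
open Matrix
open scoped ComplexOrder

/-- If a finite sum of matrices of the form `A j * (A j)ᴴ` vanishes, then each `A j = 0`. -/
lemma aux_sum_self_mul_conjTranspose_eq_zero {n k : ℕ}
    {A : Fin k → Matrix (Fin n) (Fin n) ℂ}
    (h : ∑ j, A j * (A j)ᴴ = 0) (j : Fin k) : A j = 0 := by
  have hterm : ∀ j, (A j * (A j)ᴴ).trace
      = ((∑ i, ∑ l, Complex.normSq (A j i l) : ℝ) : ℂ) := by
    intro j
    simp [Matrix.trace, Matrix.diag, Matrix.mul_apply, Matrix.conjTranspose_apply,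
      Complex.star_def, Complex.mul_conj]
  have htr : ∑ j, (A j * (A j)ᴴ).trace = 0 := by
    rw [← Matrix.trace_sum, h, Matrix.trace_zero]
  have hcast : ∑ j, ((∑ i, ∑ l, Complex.normSq (A j i l) : ℝ) : ℂ) = 0 := by
    simp only [← hterm]; exact htr
  have hg : ∑ j, ∑ i, ∑ l, Complex.normSq (A j i l) = 0 := by exact_mod_cast hcast
  have hnn : ∀ j, (0:ℝ) ≤ ∑ i, ∑ l, Complex.normSq (A j i l) :=
    fun j => Finset.sum_nonneg fun i _ => Finset.sum_nonneg fun l _ => Complex.normSq_nonneg _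
  have hj : ∑ i, ∑ l, Complex.normSq (A j i l) = 0 :=
    (Finset.sum_eq_zero_iff_of_nonneg (fun j _ => hnn j)).1 hg j (Finset.mem_univ _)
  ext i l
  have hi : ∑ l, Complex.normSq (A j i l) = 0 :=
    (Finset.sum_eq_zero_iff_of_nonneg
      (fun i _ => Finset.sum_nonneg fun l _ => Complex.normSq_nonneg _)).1 hj i
      (Finset.mem_univ _)
  have hl : Complex.normSq (A j i l) = 0 :=
    (Finset.sum_eq_zero_iff_of_nonneg (fun l _ => Complex.normSq_nonneg _)).1 hi l
      (Finset.mem_univ _)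
  simpa using Complex.normSq_eq_zero.1 hl

/-- A Kraus operator of a CPTP map leaves an enclosure invariant:
`P * (V j * P) = V j * P`. -/
lemma aux_kraus_enclosure {n k : ℕ}
    (Φ : Matrix (Fin n) (Fin n) ℂ →ₗ[ℂ] Matrix (Fin n) (Fin n) ℂ)
    (V : Fin k → Matrix (Fin n) (Fin n) ℂ)
    (hK : ∀ X, Φ X = ∑ j, V j * X * (V j)ᴴ)
    (P : Matrix (Fin n) (Fin n) ℂ) (hPP : P * P = P) (hPH : Pᴴ = P)
    (hEncl : ∀ σ : Matrix (Fin n) (Fin n) ℂ, σ.PosSemidef → σ.trace = 1 →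
      P * σ * P = σ → P * Φ σ * P = Φ σ)
    (j : Fin k) : P * (V j * P) = V j * P := by
  by_cases hP0 : P = 0
  · subst hP0; simp
  -- the trace of `P` is a positive real number `r`
  have hent : ∃ i l, P i l ≠ 0 := by
    by_contra hc
    push_neg at hc
    exact hP0 (Matrix.ext fun i l => by simpa using hc i l)
  have hdiag : ∀ i l, P i l * P l i = (Complex.normSq (P i l) : ℂ) := by
    intro i l
    have h1 : P l i = (starRingEnd ℂ) (P i l) := by
      have := congrFun (congrFun hPH l) i
      simpa [Matrix.conjTranspose_apply, Complex.star_def] using this.symm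
    rw [h1, Complex.mul_conj]
  set r : ℝ := ∑ i, ∑ l, Complex.normSq (P i l) with hr_def
  have htr : P.trace = (r : ℂ) := by
    have h1 : P.trace = ∑ i, ∑ l, (Complex.normSq (P i l) : ℂ) := by
      conv_lhs => rw [← hPP]
      simp [Matrix.trace, Matrix.diag, Matrix.mul_apply, hdiag]
    rw [h1, hr_def]
    push_cast
    rfl
  have hrpos : 0 < r := by
    obtain ⟨i0, l0, h0⟩ := hent
    exact Finset.sum_pos'
      (fun i _ => Finset.sum_nonneg fun l _ => Complex.normSq_nonneg _)
      ⟨i0, Finset.mem_univ _,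
        Finset.sum_pos' (fun l _ => Complex.normSq_nonneg _)
          ⟨l0, Finset.mem_univ _, Complex.normSq_pos.2 h0⟩⟩
  have hrne : (r : ℂ) ≠ 0 := by exact_mod_cast hrpos.ne'
  -- the normalized projection is a density matrix supported in the enclosure
  set σ : Matrix (Fin n) (Fin n) ℂ := ((r⁻¹ : ℝ) : ℂ) • P with hσ_def
  have hσPSD : σ.PosSemidef := by
    have hc2 : Real.sqrt r⁻¹ * Real.sqrt r⁻¹ = r⁻¹ :=
      Real.mul_self_sqrt (inv_nonneg.2 hrpos.le)
    have heq : (((Real.sqrt r⁻¹ : ℝ) : ℂ) • P)ᴴ * (((Real.sqrt r⁻¹ : ℝ) : ℂ) • P) = σ := by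
      rw [Matrix.conjTranspose_smul, hPH, smul_mul_smul_comm, hPP, hσ_def]
      congr 1
      rw [Complex.star_def, Complex.conj_ofReal, ← Complex.ofReal_mul, hc2]
    exact heq ▸ Matrix.posSemidef_conjTranspose_mul_self _
  have hσtr : σ.trace = 1 := by
    rw [hσ_def, Matrix.trace_smul, htr, smul_eq_mul, ← Complex.ofReal_mul,
      inv_mul_cancel₀ hrpos.ne']
    norm_num
  have hσsupp : P * σ * P = σ := by
    simp only [hσ_def, Matrix.mul_smul, Matrix.smul_mul, ← Matrix.mul_assoc, hPP]
  have hE : P * Φ σ * P = Φ σ := hEncl σ hσPSD hσtr hσsupp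
  -- hence `(1-P) Φ(P) (1-P) = 0`
  have hPσ : P = (r : ℂ) • σ := by
    rw [hσ_def, smul_smul, ← Complex.ofReal_mul, mul_inv_cancel₀ hrpos.ne']
    norm_num
  have h0P : (1 - P) * P = 0 := by
    rw [Matrix.sub_mul, Matrix.one_mul, hPP, sub_self]
  have hΦ : Φ P = (r : ℂ) • Φ σ := by
    conv_lhs => rw [hPσ]
    exact Φ.map_smul _ _
  have hQ : (1 - P) * Φ P * (1 - P) = 0 := by
    rw [hΦ, ← hE]
    rw [Matrix.mul_smul, Matrix.smul_mul]
    rw [show (1 - P) * (P * Φ σ * P) = ((1 - P) * P) * Φ σ * P by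
      simp only [Matrix.mul_assoc]]
    rw [h0P]
    simp
  -- the sum of `(1-P) V j P ((1-P) V j P)ᴴ` equals `(1-P) Φ(P) (1-P) = 0`
  have hQH : (1 - P)ᴴ = 1 - P := by simp [hPH]
  have hsum : ∑ i, ((1 - P) * V i * P) * (((1 - P) * V i * P)ᴴ) = 0 := by
    have hterm : ∀ i, ((1 - P) * V i * P) * (((1 - P) * V i * P)ᴴ)
        = (1 - P) * (V i * P * (V i)ᴴ) * (1 - P) := by
      intro i
      simp only [Matrix.conjTranspose_mul, hQH, hPH]
      calc (1 - P) * V i * P * (P * ((V i)ᴴ * (1 - P)))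
          = (1 - P) * (V i * (P * P * ((V i)ᴴ * (1 - P)))) := by
            simp only [Matrix.mul_assoc]
        _ = (1 - P) * (V i * P * (V i)ᴴ) * (1 - P) := by
            rw [hPP]; simp only [Matrix.mul_assoc]
    rw [Finset.sum_congr rfl fun i _ => hterm i]
    rw [← Finset.sum_mul, ← Finset.mul_sum, ← hK]
    exact hQ
  have hzero : (1 - P) * V j * P = 0 :=
    aux_sum_self_mul_conjTranspose_eq_zero hsum j
  have : (1 - P) * (V j * P) = 0 := by rwa [← Matrix.mul_assoc]
  rw [Matrix.sub_mul, Matrix.one_mul, sub_eq_zero] at this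
  exact this.symm

/-- A CPTP map acts block by block on the diagonal blocks corresponding
to two orthogonal enclosures: if `supp ρ ⊆ V₁ ⊕ V₂`, then
`P_i Φ(ρ) P_i = Φ(P_i ρ P_i)` for `i = 1, 2`. -/
theorem cptp_block_by_block {n : ℕ}
    (Φ : Matrix (Fin n) (Fin n) ℂ →ₗ[ℂ] Matrix (Fin n) (Fin n) ℂ)
    (hCP : ∃ (k : ℕ) (V : Fin k → Matrix (Fin n) (Fin n) ℂ),
      ∀ X, Φ X = ∑ j, V j * X * (V j)ᴴ)
    (hTP : ∀ X : Matrix (Fin n) (Fin n) ℂ, (Φ X).trace = X.trace)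
    (P₁ P₂ : Matrix (Fin n) (Fin n) ℂ)
    (hP₁ : P₁ * P₁ = P₁ ∧ P₁ᴴ = P₁) (hP₂ : P₂ * P₂ = P₂ ∧ P₂ᴴ = P₂)
    (horth : P₁ * P₂ = 0)
    (hEncl₁ : ∀ σ : Matrix (Fin n) (Fin n) ℂ, σ.PosSemidef → σ.trace = 1 →
      P₁ * σ * P₁ = σ → P₁ * Φ σ * P₁ = Φ σ)
    (hEncl₂ : ∀ σ : Matrix (Fin n) (Fin n) ℂ, σ.PosSemidef → σ.trace = 1 →
      P₂ * σ * P₂ = σ → P₂ * Φ σ * P₂ = Φ σ)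
    (ρ : Matrix (Fin n) (Fin n) ℂ) (hρ : ρ.PosSemidef ∧ ρ.trace = 1)
    (hsupp : (P₁ + P₂) * ρ * (P₁ + P₂) = ρ) :
    P₁ * Φ ρ * P₁ = Φ (P₁ * ρ * P₁) ∧ P₂ * Φ ρ * P₂ = Φ (P₂ * ρ * P₂) := by
  obtain ⟨k, V, hK⟩ := hCP
  have horth' : P₂ * P₁ = 0 := by
    have := congrArg Matrix.conjTranspose horth
    rwa [Matrix.conjTranspose_mul, hP₁.2, hP₂.2, Matrix.conjTranspose_zero] at this
  have h1 : ∀ j, P₁ * (V j * P₁) = V j * P₁ :=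
    aux_kraus_enclosure Φ V hK P₁ hP₁.1 hP₁.2 hEncl₁
  have h2 : ∀ j, P₂ * (V j * P₂) = V j * P₂ :=
    aux_kraus_enclosure Φ V hK P₂ hP₂.1 hP₂.2 hEncl₂
  -- the key algebraic identities
  have e1 : ∀ j, P₁ * V j * (P₁ + P₂) = V j * P₁ := by
    intro j
    rw [Matrix.mul_add, Matrix.mul_assoc, Matrix.mul_assoc, ← h1 j, ← h2 j,
      ← Matrix.mul_assoc P₁ P₁, ← Matrix.mul_assoc P₁ P₂, hP₁.1, horth]
    simp [h1 j]
  have e2 : ∀ j, P₂ * V j * (P₁ + P₂) = V j * P₂ := by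
    intro j
    rw [Matrix.mul_add, Matrix.mul_assoc, Matrix.mul_assoc, ← h1 j, ← h2 j,
      ← Matrix.mul_assoc P₂ P₁, ← Matrix.mul_assoc P₂ P₂, hP₂.1, horth']
    simp [h2 j]
  have e1' : ∀ j, (P₁ + P₂) * (V j)ᴴ * P₁ = P₁ * (V j)ᴴ := by
    intro j
    have := congrArg Matrix.conjTranspose (e1 j)
    rwa [Matrix.conjTranspose_mul, Matrix.conjTranspose_mul, Matrix.conjTranspose_add,
      hP₁.2, hP₂.2, Matrix.conjTranspose_mul, hP₁.2, ← Matrix.mul_assoc] at this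
  have e2' : ∀ j, (P₁ + P₂) * (V j)ᴴ * P₂ = P₂ * (V j)ᴴ := by
    intro j
    have := congrArg Matrix.conjTranspose (e2 j)
    rwa [Matrix.conjTranspose_mul, Matrix.conjTranspose_mul, Matrix.conjTranspose_add,
      hP₁.2, hP₂.2, Matrix.conjTranspose_mul, hP₂.2, ← Matrix.mul_assoc] at this
  constructor
  · rw [hK, hK, Finset.mul_sum, Finset.sum_mul]
    refine Finset.sum_congr rfl fun j _ => ?_
    conv_lhs => rw [← hsupp]
    calc P₁ * (V j * ((P₁ + P₂) * ρ * (P₁ + P₂)) * (V j)ᴴ) * P₁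
        = (P₁ * V j * (P₁ + P₂)) * ρ * ((P₁ + P₂) * (V j)ᴴ * P₁) := by
          simp only [Matrix.mul_assoc]
      _ = (V j * P₁) * ρ * (P₁ * (V j)ᴴ) := by rw [e1 j, e1' j]
      _ = V j * (P₁ * ρ * P₁) * (V j)ᴴ := by simp only [Matrix.mul_assoc]
  · rw [hK, hK, Finset.mul_sum, Finset.sum_mul]
    refine Finset.sum_congr rfl fun j _ => ?_
    conv_lhs => rw [← hsupp]
    calc P₂ * (V j * ((P₁ + P₂) * ρ * (P₁ + P₂)) * (V j)ᴴ) * P₂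
        = (P₂ * V j * (P₁ + P₂)) * ρ * ((P₁ + P₂) * (V j)ᴴ * P₂) := by
          simp only [Matrix.mul_assoc]
      _ = (V j * P₂) * ρ * (P₂ * (V j)ᴴ) := by rw [e2 j, e2' j]
      _ = V j * (P₂ * ρ * P₂) * (V j)ᴴ := by simp only [Matrix.mul_assoc]
end
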